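/- Let γ: I → M be a slant non-geodesic curve with null normal in a 3-dimensional normal almost paracontact metric manifold, with η(γ̇) = c constant and c² ≠ 1. Then α∘γ = ± g(N, φγ̇)/(1 − c²) ≠ 0, and the Cartan data of γ satisfy N = −α(ξ − cγ̇ ± φγ̇), κ = α′/α ± β + αc, and W = (−1/(2α(1 − c²)))(ξ − cγ̇ ∓ φγ̇), where α, β denote the compositions with γ of 2α = Trace{X ↦ ∇_X ξ}, 2β = Trace{X ↦ φ∇_X ξ}, and α′ is the derivative of α∘γ. -/

import Mathlib

/-- The data, along a curve `γ : I → M`, of a 3-dimensional almost paracontact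
metric manifold `(M, φ, ξ, η, g)`: the pullback tangent bundle is trivialized
over a real vector space `V`; `g t`, `phi t`, `xi t` are the metric, the
structure tensor and the Reeb field at the point `γ t`, and `T t = γ̇(t)` is
the velocity of the curve.  The 1-form `η` is recovered as `η(v) = g v ξ`.
The axioms record: `η(ξ) = 1`, `φξ = 0`, `φ² = Id − η ⊗ ξ`,
`g(φv, φw) = −g(v,w) + η(v)η(w)`, symmetry of `g`, and that `g` has
signature `(2,1)` (an orthonormal basis with signs `(+,+,−)`). -/
structure APCMCurve (V : Type*) [AddCommGroup V] [Module ℝ V] where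
  g : ℝ → V →ₗ[ℝ] V →ₗ[ℝ] ℝ
  phi : ℝ → V →ₗ[ℝ] V
  xi : ℝ → V
  T : ℝ → V
  g_symm : ∀ t v w, g t v w = g t w v
  xi_unit : ∀ t, g t (xi t) (xi t) = 1
  phi_xi : ∀ t, phi t (xi t) = 0
  phi_sq : ∀ t v, phi t (phi t v) = v - g t v (xi t) • xi t
  compat : ∀ t v w, g t (phi t v) (phi t w) = -(g t v w) + g t v (xi t) * g t w (xi t)
  signature : ∀ t, ∃ e : Module.Basis (Fin 3) ℝ V,
    g t (e 0) (e 0) = 1 ∧ g t (e 1) (e 1) = 1 ∧ g t (e 2) (e 2) = -1 ∧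
    g t (e 0) (e 1) = 0 ∧ g t (e 0) (e 2) = 0 ∧ g t (e 1) (e 2) = 0

/-- The data, along a curve `γ`, of a 3-dimensional *normal* almost paracontact
metric manifold: in addition to `APCMCurve`, `D` is the covariant derivative
along `γ` (induced by the Levi-Civita connection `∇` of `g`), and
`a = α ∘ γ`, `b = β ∘ γ` are the compositions with `γ` of the structure
functions `α`, `β` of the normal structure (those with
`2α = Trace{X ↦ ∇_X ξ}`, `2β = Trace{X ↦ φ∇_X ξ}`), so that along `γ` one has
`∇_{γ̇} ξ = α(γ̇ − η(γ̇)ξ) + βφγ̇` (field `D_xi`) and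
`(∇_{γ̇} φ)A = β(g(γ̇,A)ξ − η(A)γ̇) + α(g(φγ̇,A)ξ − η(A)φγ̇)` for every vector
field `A` along `γ` (field `D_phi`).  `D` is additive, satisfies the Leibniz
rule and is metric-compatible. -/
structure NAPCMCurve (V : Type*) [AddCommGroup V] [Module ℝ V]
    extends APCMCurve V where
  D : (ℝ → V) → (ℝ → V)
  a : ℝ → ℝ
  b : ℝ → ℝ
  D_add : ∀ A B : ℝ → V, D (fun t => A t + B t) = fun t => D A t + D B t
  D_smul : ∀ (f : ℝ → ℝ) (A : ℝ → V) (t : ℝ), DifferentiableAt ℝ f t →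
    D (fun s => f s • A s) t = deriv f t • A t + f t • D A t
  D_metric : ∀ (A B : ℝ → V) (t : ℝ),
    HasDerivAt (fun s => g s (A s) (B s)) (g t (D A t) (B t) + g t (A t) (D B t)) t
  D_xi : ∀ t, D xi t = a t • (T t - g t (T t) (xi t) • xi t) + b t • phi t (T t)
  D_phi : ∀ (A : ℝ → V) (t : ℝ),
    D (fun s => phi s (A s)) t
      = b t • (g t (T t) (A t) • xi t - g t (A t) (xi t) • T t)
        + a t • (g t (phi t (T t)) (A t) • xi t - g t (A t) (xi t) • phi t (T t))
        + phi t (D A t)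

/-! Differentiating `g(T,T) = 1` and `η(T) = c` along `γ` gives `g(N,T) = 0` and
`g(N,ξ) = -α(1 - c²)`. The frame `T, ξ - cT, φT` is orthogonal with squared norms
`1, 1 - c², c² - 1`, so the orthogonal complement of `T` is a Lorentzian plane whose null lines
are spanned by `ξ - cT ± φT`. The null vectors `N` and `W` lie in this plane, on different null
lines because `g(N,W) = 1`; `g(N,ξ)` fixes the scale of `N` and `g(N,W)` that of `W`. Finally,
differentiating `g(N,ξ) = -α(1 - c²)` once more and inserting `∇_{γ̇}N = κN` and
`∇_{γ̇}ξ = α(γ̇ - cξ) + βφγ̇` yields `κ`. -/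

theorem LinearMap.IsOrthoᵢ.sum_smul_eq_self {K V ι : Type*} [Field K] [AddCommGroup V]
    [Module K V] [FiniteDimensional K V] [Fintype ι] {B : V →ₗ[K] V →ₗ[K] K} {f : ι → V}
    (hO : B.IsOrthoᵢ f) (hf : ∀ i, B (f i) (f i) ≠ 0)
    (hcard : Fintype.card ι = Module.finrank K V) (v : V) :
    ∑ i, (B v (f i) / B (f i) (f i)) • f i = v := by
  let b := basisOfLinearIndependentOfCardEqFinrank' f (linearIndependent_of_isOrthoᵢ hO hf) hcard
  have hb : ⇑b = f := coe_basisOfLinearIndependentOfCardEqFinrank' ..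
  have hcoeff : ∀ i, B v (f i) = b.repr v i * B (f i) (f i) := by
    intro i
    conv_lhs => rw [← b.sum_repr v, hb]
    rw [map_sum₂, Finset.sum_eq_single i]
    · simp
    · intro j _ hji
      rw [map_smul₂, hO hji, smul_zero]
    · simp
  conv_rhs => rw [← b.sum_repr v, hb]
  congr! 2 with i
  rw [hcoeff, mul_div_cancel_right₀ _ (hf i)]

namespace APCMCurve

variable {V : Type*} [AddCommGroup V] [Module ℝ V]

theorem finiteDimensional (M : APCMCurve V) : FiniteDimensional ℝ V :=
  let ⟨e, _⟩ := M.signature 0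
  Module.Finite.of_basis e

theorem finrank_eq_three (M : APCMCurve V) : Module.finrank ℝ V = 3 := by
  obtain ⟨e, -⟩ := M.signature 0
  simp [Module.finrank_eq_card_basis e]

variable (M : APCMCurve V) (t c : ℝ)

theorem g_phi_xi (v : V) : M.g t (M.phi t v) (M.xi t) = 0 := by
  have h := M.compat t (M.phi t v) (M.phi t v)
  rw [M.phi_sq t v] at h
  simp only [map_sub, map_smul, LinearMap.sub_apply, LinearMap.smul_apply, smul_eq_mul,
    M.xi_unit, M.g_symm t (M.xi t) v] at h
  nlinarith [M.compat t v v]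

theorem g_phi_self (v : V) : M.g t (M.phi t v) v = 0 := by
  have h := M.compat t v (M.phi t v)
  simp only [M.phi_sq t v, map_sub, map_smul, smul_eq_mul, g_phi_xi, mul_zero,
    M.g_symm t v (M.phi t v)] at h
  linarith

variable {M t c}

theorem g_xi_sub_T (hT : M.g t (M.T t) (M.T t) = 1) (hsl : M.g t (M.T t) (M.xi t) = c) :
    M.g t (M.xi t - c • M.T t) (M.T t) = 0 := by
  simp [M.g_symm t (M.xi t), hT, hsl]

theorem g_xi_sub_phi : M.g t (M.xi t - c • M.T t) (M.phi t (M.T t)) = 0 := by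
  simp [M.g_symm t _ (M.phi t _), g_phi_xi, g_phi_self]

theorem g_xi_sub_self (hT : M.g t (M.T t) (M.T t) = 1) (hsl : M.g t (M.T t) (M.xi t) = c) :
    M.g t (M.xi t - c • M.T t) (M.xi t - c • M.T t) = 1 - c ^ 2 := by
  simp only [map_sub, map_smul, LinearMap.sub_apply, LinearMap.smul_apply, smul_eq_mul,
    hT, M.xi_unit, M.g_symm t (M.xi t) (M.T t), hsl]
  ring

theorem g_phi_T_self (hT : M.g t (M.T t) (M.T t) = 1) (hsl : M.g t (M.T t) (M.xi t) = c) :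
    M.g t (M.phi t (M.T t)) (M.phi t (M.T t)) = c ^ 2 - 1 := by
  rw [M.compat, hT, hsl]
  ring

theorem g_smul_add_smul (hT : M.g t (M.T t) (M.T t) = 1) (hsl : M.g t (M.T t) (M.xi t) = c)
    (x y u v : ℝ) :
    M.g t (x • (M.xi t - c • M.T t) + y • M.phi t (M.T t))
        (u • (M.xi t - c • M.T t) + v • M.phi t (M.T t)) = (1 - c ^ 2) * (x * u - y * v) := by
  simp only [map_add, map_smul, LinearMap.add_apply, LinearMap.smul_apply, smul_eq_mul,
    g_xi_sub_self hT hsl, g_phi_T_self hT hsl, g_xi_sub_phi,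
    M.g_symm t (M.phi t _) (M.xi t - _)]
  ring

theorem g_xi_sub_add_smul_phi_phi (hT : M.g t (M.T t) (M.T t) = 1)
    (hsl : M.g t (M.T t) (M.xi t) = c) (s : ℝ) :
    M.g t (M.xi t - c • M.T t + s • M.phi t (M.T t)) (M.phi t (M.T t)) = -(s * (1 - c ^ 2)) := by
  simp only [map_add, map_smul, LinearMap.add_apply, LinearMap.smul_apply, smul_eq_mul,
    g_xi_sub_phi, g_phi_T_self hT hsl]
  ring

theorem eq_of_g_T_eq_zero (hc : c ^ 2 ≠ 1) (hT : M.g t (M.T t) (M.T t) = 1)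
    (hsl : M.g t (M.T t) (M.xi t) = c) {v : V} (hv : M.g t v (M.T t) = 0) :
    v = (M.g t v (M.xi t) / (1 - c ^ 2)) • (M.xi t - c • M.T t)
      + (M.g t v (M.phi t (M.T t)) / (c ^ 2 - 1)) • M.phi t (M.T t) := by
  have := M.finiteDimensional
  have hXT := g_xi_sub_T hT hsl
  have hPT := M.g_phi_self t (M.T t)
  have hXP : M.g t (M.xi t - c • M.T t) (M.phi t (M.T t)) = 0 := g_xi_sub_phi
  have hTX : M.g t (M.T t) (M.xi t - c • M.T t) = 0 := by rw [M.g_symm, hXT]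
  have hTP : M.g t (M.T t) (M.phi t (M.T t)) = 0 := by rw [M.g_symm, hPT]
  have hPX : M.g t (M.phi t (M.T t)) (M.xi t - c • M.T t) = 0 := by rw [M.g_symm, hXP]
  have hO : (M.g t).IsOrthoᵢ ![M.T t, M.xi t - c • M.T t, M.phi t (M.T t)] := by
    intro i j hij
    fin_cases i <;> fin_cases j <;> simp_all [Function.onFun]
  have hdiag : ∀ i, M.g t (![M.T t, M.xi t - c • M.T t, M.phi t (M.T t)] i)
      (![M.T t, M.xi t - c • M.T t, M.phi t (M.T t)] i) ≠ 0 := by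
    intro i
    fin_cases i
    · simp [hT]
    · simp only [Fin.mk_one, Matrix.cons_val_one, Matrix.cons_val_zero, g_xi_sub_self hT hsl]
      exact sub_ne_zero.mpr (Ne.symm hc)
    · simpa [g_phi_T_self hT hsl] using sub_ne_zero.mpr hc
  have hvX : M.g t v (M.xi t - c • M.T t) = M.g t v (M.xi t) := by simp [hv]
  have h := hO.sum_smul_eq_self hdiag (by simp [M.finrank_eq_three]) v
  simp only [Fin.sum_univ_three, Matrix.cons_val_zero, Matrix.cons_val_one, Matrix.cons_val_two,
    Matrix.head_cons, Matrix.tail_cons, hv, hvX, zero_div, zero_smul, zero_add,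
    g_xi_sub_self hT hsl, g_phi_T_self hT hsl] at h
  exact h.symm

theorem null_orthogonal_eq_neg_smul (hc : c ^ 2 ≠ 1) (hT : M.g t (M.T t) (M.T t) = 1)
    (hsl : M.g t (M.T t) (M.xi t) = c) {v : V} {a : ℝ} (hv0 : v ≠ 0)
    (hvT : M.g t v (M.T t) = 0) (hvv : M.g t v v = 0)
    (hvxi : M.g t v (M.xi t) = -(a * (1 - c ^ 2))) :
    a ≠ 0 ∧ ∃ s : ℝ, (s = 1 ∨ s = -1) ∧
      v = (-a) • (M.xi t - c • M.T t + s • M.phi t (M.T t)) := by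
  have hc' : 1 - c ^ 2 ≠ 0 := sub_ne_zero.mpr (Ne.symm hc)
  set q := M.g t v (M.phi t (M.T t)) / (c ^ 2 - 1)
  have hv : v = (-a) • (M.xi t - c • M.T t) + q • M.phi t (M.T t) := by
    rw [eq_of_g_T_eq_zero hc hT hsl hvT, hvxi, neg_div, mul_div_cancel_right₀ _ hc']
  have hq : q = a ∨ q = -a := by
    rw [hv, g_smul_add_smul hT hsl] at hvv
    have : (-a) * (-a) - q * q = 0 := (mul_eq_zero.mp hvv).resolve_left hc'
    exact sq_eq_sq_iff_eq_or_eq_neg.mp (by linear_combination -this)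
  have ha : a ≠ 0 := by
    rintro rfl
    apply hv0
    rw [hv]
    rcases hq with hq | hq <;> simp [hq]
  refine ⟨ha, ?_⟩
  rcases hq with hq | hq
  · exact ⟨-1, Or.inr rfl, by rw [hv, hq]; module⟩
  · exact ⟨1, Or.inl rfl, by rw [hv, hq]; module⟩

theorem null_orthogonal_eq_of_g_eq_one (hc : c ^ 2 ≠ 1) (hT : M.g t (M.T t) (M.T t) = 1)
    (hsl : M.g t (M.T t) (M.xi t) = c) {w : V} {a s : ℝ} (hs : s = 1 ∨ s = -1)
    (hwT : M.g t w (M.T t) = 0) (hww : M.g t w w = 0)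
    (hnw : M.g t ((-a) • (M.xi t - c • M.T t + s • M.phi t (M.T t))) w = 1) :
    w = (-1 / (2 * a * (1 - c ^ 2))) • (M.xi t - c • M.T t - s • M.phi t (M.T t)) := by
  have hc' : 1 - c ^ 2 ≠ 0 := sub_ne_zero.mpr (Ne.symm hc)
  set x := M.g t w (M.xi t) / (1 - c ^ 2)
  set y := M.g t w (M.phi t (M.T t)) / (c ^ 2 - 1)
  have hw : w = x • (M.xi t - c • M.T t) + y • M.phi t (M.T t) :=
    eq_of_g_T_eq_zero hc hT hsl hwT
  have hn : (-a) • (M.xi t - c • M.T t + s • M.phi t (M.T t))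
      = (-a) • (M.xi t - c • M.T t) + (-a * s) • M.phi t (M.T t) := by module
  rw [hw, g_smul_add_smul hT hsl] at hww
  rw [hn, hw, g_smul_add_smul hT hsl] at hnw
  have hxy : y = x ∨ y = -x :=
    sq_eq_sq_iff_eq_or_eq_neg.mp (by linear_combination -((mul_eq_zero.mp hww).resolve_left hc'))
  have hy : y = -s * x := by
    rcases hs with rfl | rfl <;> rcases hxy with hxy | hxy <;> rw [hxy] at hnw ⊢
    · exact absurd hnw (by ring_nf; norm_num)
    · ring
    · ring
    · exact absurd hnw (by ring_nf; norm_num)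
  have hs2 : s ^ 2 = 1 := by rcases hs with rfl | rfl <;> norm_num
  rw [hy] at hnw
  have hd : 2 * a * (1 - c ^ 2) ≠ 0 := by
    intro hd
    have : (1 : ℝ) = 0 := by linear_combination -hnw - x * hd - a * x * (1 - c ^ 2) * hs2
    exact one_ne_zero this
  have hx : x = -1 / (2 * a * (1 - c ^ 2)) := by
    rw [eq_div_iff hd]
    linear_combination -hnw - a * x * (1 - c ^ 2) * hs2
  rw [hw, hy, hx]
  module

end APCMCurve

namespace NAPCMCurve

open APCMCurve

variable {V : Type*} [AddCommGroup V] [Module ℝ V] (M : NAPCMCurve V)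

theorem g_D_eq_neg_of_const {A B : ℝ → V} {k : ℝ} (h : ∀ s, M.g s (A s) (B s) = k) (t : ℝ) :
    M.g t (M.D A t) (B t) = -M.g t (A t) (M.D B t) := by
  have h' := M.D_metric A B t
  rw [show (fun s => M.g s (A s) (B s)) = fun _ => k from funext h] at h'
  linarith [h'.unique (hasDerivAt_const t k)]

theorem g_D_xi (t : ℝ) (v : V) :
    M.g t v (M.D M.xi t) = M.a t * (M.g t v (M.T t) - M.g t (M.T t) (M.xi t) * M.g t v (M.xi t))
      + M.b t * M.g t v (M.phi t (M.T t)) := by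
  simp only [M.D_xi, map_add, map_sub, map_smul, smul_eq_mul]

variable {M} {c : ℝ}

theorem g_D_T_self (hunit : ∀ t, M.g t (M.T t) (M.T t) = 1) (t : ℝ) :
    M.g t (M.D M.T t) (M.T t) = 0 := by
  have h := M.g_D_eq_neg_of_const hunit t
  rw [M.g_symm t (M.T t)] at h
  linarith

theorem g_D_T_xi (hunit : ∀ t, M.g t (M.T t) (M.T t) = 1)
    (hslant : ∀ t, M.g t (M.T t) (M.xi t) = c) (t : ℝ) :
    M.g t (M.D M.T t) (M.xi t) = -(M.a t * (1 - c ^ 2)) := by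
  rw [M.g_D_eq_neg_of_const hslant t, g_D_xi, hunit, hslant, M.g_symm t (M.T t),
    g_phi_self]
  ring

theorem hasDerivAt_a (hc : c ^ 2 ≠ 1) (hunit : ∀ t, M.g t (M.T t) (M.T t) = 1)
    (hslant : ∀ t, M.g t (M.T t) (M.xi t) = c) (t : ℝ) :
    HasDerivAt M.a
      (-(M.g t (M.D (M.D M.T) t) (M.xi t) + M.g t (M.D M.T t) (M.D M.xi t)) / (1 - c ^ 2)) t := by
  have hc' : 1 - c ^ 2 ≠ 0 := sub_ne_zero.mpr (Ne.symm hc)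
  refine ((M.D_metric (M.D M.T) M.xi t).neg.div_const (1 - c ^ 2)).congr_of_eventuallyEq
    (.of_forall fun s => ?_)
  simp only [Pi.neg_apply, g_D_T_xi hunit hslant s]
  field_simp

theorem eq_of_D_normal_eq_smul (hc : c ^ 2 ≠ 1) (hunit : ∀ t, M.g t (M.T t) (M.T t) = 1)
    (hslant : ∀ t, M.g t (M.T t) (M.xi t) = c) {t κ s : ℝ}
    (hκ : M.D (M.D M.T) t = κ • M.D M.T t) (ha : M.a t ≠ 0)
    (hN : M.D M.T t = (-M.a t) • (M.xi t - c • M.T t + s • M.phi t (M.T t))) :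
    κ = deriv M.a t / M.a t + s * M.b t + M.a t * c := by
  have hc' : 1 - c ^ 2 ≠ 0 := sub_ne_zero.mpr (Ne.symm hc)
  rw [(hasDerivAt_a hc hunit hslant t).deriv, hκ, map_smul, LinearMap.smul_apply, smul_eq_mul,
    g_D_xi, g_D_T_self hunit, g_D_T_xi hunit hslant, hslant, hN, map_smul, LinearMap.smul_apply,
    smul_eq_mul, g_xi_sub_add_smul_phi_phi (hunit t) (hslant t)]
  field_simp
  ring

end NAPCMCurve

theorem slant_null_normal_cartan_general {V : Type*} [AddCommGroup V] [Module ℝ V]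
    (M : NAPCMCurve V) (c : ℝ) (hc : c ^ 2 ≠ 1)
    (hunit : ∀ t, M.g t (M.T t) (M.T t) = 1)
    (hslant : ∀ t, M.g t (M.T t) (M.xi t) = c)
    (hnongeo : ∀ t, M.D M.T t ≠ 0)
    (hnullnormal : ∀ t, M.g t (M.D M.T t) (M.D M.T t) = 0)
    (N : ℝ → V) (hN : N = M.D M.T)
    (κ : ℝ → ℝ) (hκ : ∀ t, M.D N t = κ t • N t)
    (W : ℝ → V)
    (hW1 : ∀ t, M.g t (N t) (W t) = 1)
    (hW2 : ∀ t, M.g t (W t) (W t) = 0)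
    (hW3 : ∀ t, M.g t (M.T t) (W t) = 0) :
    ∀ t : ℝ, M.a t ≠ 0 ∧ ∃ s : ℝ, (s = 1 ∨ s = -1) ∧
      M.a t = s * (M.g t (N t) (M.phi t (M.T t)) / (1 - c ^ 2)) ∧
      N t = (-(M.a t)) • (M.xi t - c • M.T t + s • M.phi t (M.T t)) ∧
      κ t = deriv M.a t / M.a t + s * M.b t + M.a t * c ∧
      W t = (-1 / (2 * M.a t * (1 - c ^ 2)))
          • (M.xi t - c • M.T t - s • M.phi t (M.T t)) := by
  subst hN
  intro t
  obtain ⟨ha, s, hs, hN⟩ := APCMCurve.null_orthogonal_eq_neg_smul hc (hunit t) (hslant t)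
    (hnongeo t) (NAPCMCurve.g_D_T_self hunit t) (hnullnormal t)
    (NAPCMCurve.g_D_T_xi hunit hslant t)
  refine ⟨ha, s, hs, ?_, hN, NAPCMCurve.eq_of_D_normal_eq_smul hc hunit hslant (hκ t) ha hN, ?_⟩
  · have hc' : 1 - c ^ 2 ≠ 0 := sub_ne_zero.mpr (Ne.symm hc)
    rw [hN, map_smul, LinearMap.smul_apply, smul_eq_mul,
      APCMCurve.g_xi_sub_add_smul_phi_phi (hunit t) (hslant t)]
    field_simp
    rcases hs with rfl | rfl <;> ring
  · exact APCMCurve.null_orthogonal_eq_of_g_eq_one hc (hunit t) (hslant t) hs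
      ((M.g_symm t _ _).trans (hW3 t)) (hW2 t) (hN ▸ hW1 t)

/-- Let `γ` be a slant non-geodesic curve with null normal
(`g(γ̇,γ̇) = 1`, `∇_{γ̇}γ̇ ≠ 0`, `g(∇_{γ̇}γ̇,∇_{γ̇}γ̇) = 0`) in a 3-dimensional
normal almost paracontact metric manifold, with `η(γ̇) = c` constant, `c² ≠ 1`.
With the Cartan data `T = γ̇`, `N = ∇_{γ̇}T`, `κ` with `∇_{γ̇}N = κN`, and `W`
the field with `g(N,W) = 1`, `g(W,W) = g(T,W) = 0`, one has
`α = ±g(N,φγ̇)/(1−c²) ≠ 0`, `N = −α(ξ − cγ̇ ± φγ̇)`, `κ = α′/α ± β + αc` and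
`W = (−1/(2α(1−c²)))(ξ − cγ̇ ∓ φγ̇)`. -/
theorem slant_null_normal_cartan {V : Type*} [AddCommGroup V] [Module ℝ V]
    (M : NAPCMCurve V) (c : ℝ) (hc : c ^ 2 ≠ 1)
    (hunit : ∀ t, M.g t (M.T t) (M.T t) = 1)
    (hslant : ∀ t, M.g t (M.T t) (M.xi t) = c)
    (hnongeo : ∀ t, M.D M.T t ≠ 0)
    (hnullnormal : ∀ t, M.g t (M.D M.T t) (M.D M.T t) = 0)
    (hadiff : Differentiable ℝ M.a)
    (N : ℝ → V) (hN : N = M.D M.T)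
    (κ : ℝ → ℝ) (hκ : ∀ t, M.D N t = κ t • N t)
    (W : ℝ → V)
    (hW1 : ∀ t, M.g t (N t) (W t) = 1)
    (hW2 : ∀ t, M.g t (W t) (W t) = 0)
    (hW3 : ∀ t, M.g t (M.T t) (W t) = 0) :
    ∀ t : ℝ, M.a t ≠ 0 ∧ ∃ s : ℝ, (s = 1 ∨ s = -1) ∧
      M.a t = s * (M.g t (N t) (M.phi t (M.T t)) / (1 - c ^ 2)) ∧
      N t = (-(M.a t)) • (M.xi t - c • M.T t + s • M.phi t (M.T t)) ∧
      κ t = deriv M.a t / M.a t + s * M.b t + M.a t * c ∧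
      W t = (-1 / (2 * M.a t * (1 - c ^ 2)))
          • (M.xi t - c • M.T t - s • M.phi t (M.T t)) :=
  slant_null_normal_cartan_general M c hc hunit hslant hnongeo hnullnormal N hN κ hκ W hW1 hW2 hW3
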